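/- arXiv:1202.5569 — 2 statements merged into one kernel-verified Lean document; each statement's English description precedes it below -/
import Mathlib

section
/- Let G be a finite connected graph on n vertices carrying an ergodic random walk with stationary distribution π, and let T be a mixing time satisfying max_{u,x} |P_u^{(T)}(x) − π_x| ≤ 1/n³. Then for any vertices u, v and any t ≥ 0, the probability that the walk started at u does not visit v during steps 0,…,t is at most exp( −(1−o(1))·⌊t/τ_v⌋ / 2 ), where τ_v = T + 2·H[π,v]. -/
open Finset Filter Classical
open scoped Topology

noncomputable section

variable {V : Type*} [Fintype V] [DecidableEq V]

/-- Transition probability of the weighted random walk on the weighted graph `(G, w)`: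
`P_{u,v} = w(u,v)/w(u)`. -/
def wP (G : SimpleGraph V) (w : V → V → ℝ) (u v : V) : ℝ :=
  (if G.Adj u v then w u v else 0) / (∑ x, if G.Adj u x then w u x else 0)

/-- Stationary probability of the weighted random walk: `π_v = w(v)/w(G)`. -/
def statW (G : SimpleGraph V) (w : V → V → ℝ) (v : V) : ℝ :=
  (∑ y, if G.Adj v y then w v y else 0) /
    (∑ u, ∑ y, if G.Adj u y then w u y else 0)

/-- Probability weight of a trajectory under the transition kernel `P`. -/
def stepWeight (P : V → V → ℝ) {t : ℕ} (f : Fin (t + 1) → V) : ℝ :=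
  ∏ i : Fin t, P (f i.castSucc) (f i.succ)

/-- Probability that the `t`-step trajectory of the chain `P` started at `u`
satisfies the predicate `A`. -/
def eventProb (P : V → V → ℝ) (u : V) (t : ℕ) (A : (Fin (t + 1) → V) → Prop) : ℝ :=
  ∑ f : Fin (t + 1) → V, if f 0 = u ∧ A f then stepWeight P f else 0

/-- Expected hitting time `H[u,v] = ∑_{t≥0} Pr(T_v > t)`. -/
def hitReal (P : V → V → ℝ) (u v : V) : ℝ :=
  ∑' t : ℕ, eventProb P u t (fun f => ∀ i, f i ≠ v)

/-- The hitting time of `v` from stationarity, `H[π,v] = ∑_u π_u·H[u,v]`. -/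
def hitFromStat (G : SimpleGraph V) (w : V → V → ℝ) (v : V) : ℝ :=
  ∑ u, statW G w u * hitReal (wP G w) u v

/-- `R_v(T) = ∑_{t=0}^{T−1} P_v^{(t)}(v)`. -/
def retSumW (G : SimpleGraph V) (w : V → V → ℝ) (T : ℕ) (v : V) : ℝ :=
  ∑ t ∈ Finset.range T, ((Matrix.of (wP G w)) ^ t) v v

end

noncomputable section AuxProof

variable {V : Type*} [Fintype V] [DecidableEq V]

/-- recursive survival function -/
def surv (P : V → V → ℝ) (v : V) : ℕ → V → ℝ
  | 0, u => if u = v then 0 else 1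
  | (t+1), u => if u = v then 0 else ∑ x, P u x * surv P v t x

lemma stepWeight_cons (P : V → V → ℝ) {t : ℕ} (x : V) (g : Fin (t + 1) → V) :
    stepWeight P (Fin.cons x g) = P x (g 0) * stepWeight P g := by
  unfold stepWeight
  rw [Fin.prod_univ_succ]
  refine congrArg₂ (· * ·) (by simp) ?_
  apply Finset.prod_congr rfl
  intro i _
  rw [← Fin.succ_castSucc]
  simp [Fin.cons_succ]

lemma sum_pi_succ {t : ℕ} (Φ : (Fin (t + 2) → V) → ℝ) :
    ∑ f : Fin (t + 2) → V, Φ f = ∑ x : V, ∑ g : Fin (t + 1) → V, Φ (Fin.cons x g) := by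
  rw [← Equiv.sum_comp (Fin.consEquiv (fun _ => V)) Φ, Fintype.sum_prod_type]
  rfl

lemma iteCongr {α : Sort*} {p q : Prop} {h1 : Decidable p} {h2 : Decidable q} {a b c : α}
    (hpq : p ↔ q) (hac : a = c) : (@ite α p h1 a b) = (@ite α q h2 c b) := by
  obtain rfl : p = q := propext hpq
  obtain rfl := Subsingleton.elim h1 h2
  rw [hac]

lemma eventProb_eq_surv (P : V → V → ℝ) (v : V) :
    ∀ (t : ℕ) (u : V), eventProb P u t (fun f => ∀ i, f i ≠ v) = surv P v t u := by
  intro t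
  induction t with
  | zero =>
    intro u
    unfold eventProb surv
    rw [← Equiv.sum_comp (Equiv.funUnique (Fin 1) V).symm]
    trans (∑ x : V, if x = u ∧ ¬ x = v then (1:ℝ) else 0)
    · exact Finset.sum_congr rfl fun x _ =>
        iteCongr (by simp [Fin.forall_fin_one, Equiv.funUnique_symm_apply]) (by simp [stepWeight])
    · by_cases huv : u = v
      · simp [ite_and, huv]
      · simp [ite_and, huv, Ne.symm huv]
  | succ t ih =>
    intro u
    unfold eventProb
    rw [sum_pi_succ]
    have hcond : ∀ (x : V) (g : Fin (t + 1) → V),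
        ((Fin.cons x g : Fin (t+2) → V) 0 = u ∧ ∀ i : Fin (t+2), (Fin.cons x g : Fin (t+2) → V) i ≠ v)
        ↔ (x = u ∧ x ≠ v ∧ ∀ i : Fin (t+1), g i ≠ v) := by
      intro x g
      rw [Fin.forall_fin_succ]
      simp [Fin.cons_succ]
    trans (∑ x : V, ∑ g : Fin (t+1) → V,
        if x = u ∧ x ≠ v ∧ ∀ i : Fin (t+1), g i ≠ v then P x (g 0) * stepWeight P g else 0)
    · exact Finset.sum_congr rfl fun x _ => Finset.sum_congr rfl fun g _ =>
        iteCongr (hcond x g) (stepWeight_cons P x g)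
    · rw [Finset.sum_comm]
      unfold surv
      by_cases huv : u = v
      · rw [if_pos huv]
        refine Eq.trans (Finset.sum_congr rfl fun g _ => ?_) Finset.sum_const_zero
        show _ = (0:ℝ)
        apply Finset.sum_eq_zero
        intro x _
        rw [if_neg]
        rintro ⟨h1, h2, -⟩
        exact h2 (h1.trans huv)
      · rw [if_neg huv]
        have hstep : ∀ x : V, P u x * surv P v t x
            = ∑ g : Fin (t+1) → V, (if g 0 = x ∧ ∀ i : Fin (t+1), g i ≠ v then P u x * stepWeight P g else 0) := by
          intro x
          rw [← ih x, eventProb, Finset.mul_sum]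
          refine Finset.sum_congr rfl fun g _ => ?_
          simp only [mul_ite, mul_zero]
        trans (∑ g : Fin (t+1) → V, if ∀ i : Fin (t+1), g i ≠ v then P u (g 0) * stepWeight P g else 0)
        · refine Finset.sum_congr rfl fun g _ => ?_
          by_cases hA : ∀ i : Fin (t+1), g i ≠ v
          · simp [hA, ite_and, huv, Finset.sum_ite_eq']
          · simp [hA]
        · refine Eq.trans ?_ (Finset.sum_congr rfl fun x _ => (hstep x).symm)
          rw [Finset.sum_comm]
          refine Finset.sum_congr rfl fun g _ => ?_
          by_cases hA : ∀ i : Fin (t+1), g i ≠ v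
          · simp [hA, ite_and, Finset.sum_ite_eq]
          · simp [hA]

section Chain

variable {P : V → V → ℝ} {v : V}

lemma surv_zero (u : V) : surv P v 0 u = if u = v then 0 else 1 := rfl

lemma surv_succ (t : ℕ) (u : V) :
    surv P v (t+1) u = if u = v then 0 else ∑ x, P u x * surv P v t x := rfl

lemma surv_nonneg (hP0 : ∀ u x, 0 ≤ P u x) : ∀ (t : ℕ) (u : V), 0 ≤ surv P v t u := by
  intro t
  induction t with
  | zero => intro u; rw [surv_zero]; split_ifs <;> norm_num
  | succ t ih =>
    intro u; rw [surv_succ]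
    split_ifs
    · exact le_refl 0
    · exact Finset.sum_nonneg fun x _ => mul_nonneg (hP0 u x) (ih x)

lemma surv_le_one (hP0 : ∀ u x, 0 ≤ P u x) (hP1 : ∀ u, ∑ x, P u x = 1) :
    ∀ (t : ℕ) (u : V), surv P v t u ≤ 1 := by
  intro t
  induction t with
  | zero => intro u; rw [surv_zero]; split_ifs <;> norm_num
  | succ t ih =>
    intro u; rw [surv_succ]
    split_ifs
    · norm_num
    · calc ∑ x, P u x * surv P v t x ≤ ∑ x, P u x * 1 :=
            Finset.sum_le_sum fun x _ => mul_le_mul_of_nonneg_left (ih x) (hP0 u x)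
        _ = 1 := by simp only [mul_one]; exact hP1 u

lemma surv_self : ∀ t : ℕ, surv P v t v = 0 := by
  intro t; cases t <;> simp [surv]

lemma surv_succ_le (hP0 : ∀ u x, 0 ≤ P u x) (hP1 : ∀ u, ∑ x, P u x = 1) :
    ∀ (t : ℕ) (u : V), surv P v (t+1) u ≤ surv P v t u := by
  intro t
  induction t with
  | zero =>
    intro u
    rw [surv_succ, surv_zero]
    split_ifs
    · exact le_refl 0
    · calc ∑ x, P u x * surv P v 0 x ≤ ∑ x, P u x * 1 :=
            Finset.sum_le_sum fun x _ =>
              mul_le_mul_of_nonneg_left (surv_le_one hP0 hP1 0 x) (hP0 u x)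
        _ = 1 := by simp only [mul_one]; exact hP1 u
  | succ t ih =>
    intro u
    rw [surv_succ, surv_succ]
    split_ifs
    · exact le_refl 0
    · exact Finset.sum_le_sum fun x _ => mul_le_mul_of_nonneg_left (ih x) (hP0 u x)

lemma surv_anti (hP0 : ∀ u x, 0 ≤ P u x) (hP1 : ∀ u, ∑ x, P u x = 1)
    {a b : ℕ} (h : a ≤ b) (u : V) : surv P v b u ≤ surv P v a u := by
  induction b, h using Nat.le_induction with
  | base => exact le_refl _
  | succ b hab ih => exact le_trans (surv_succ_le hP0 hP1 b u) ih

lemma surv_add_le (hP0 : ∀ u x, 0 ≤ P u x) {r : ℕ} {B : ℝ} (hB : 0 ≤ B)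
    (hr : ∀ x, surv P v r x ≤ B) : ∀ (s : ℕ) (u : V), surv P v (s + r) u ≤ surv P v s u * B := by
  intro s
  induction s with
  | zero =>
    intro u
    rw [Nat.zero_add, surv_zero]
    by_cases huv : u = v
    · rw [if_pos huv, huv, surv_self, zero_mul]
    · rw [if_neg huv, one_mul]; exact hr u
  | succ s ih =>
    intro u
    rw [show s + 1 + r = (s + r) + 1 by omega, surv_succ, surv_succ]
    split_ifs
    · simp
    · calc ∑ x, P u x * surv P v (s + r) x ≤ ∑ x, P u x * (surv P v s x * B) :=
            Finset.sum_le_sum fun x _ => mul_le_mul_of_nonneg_left (ih x) (hP0 u x)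
        _ = (∑ x, P u x * surv P v s x) * B := by
            rw [Finset.sum_mul]
            exact Finset.sum_congr rfl fun x _ => by ring

lemma surv_mul_le (hP0 : ∀ u x, 0 ≤ P u x) {s : ℕ} {B : ℝ} (hB : 0 ≤ B)
    (hs : ∀ x, surv P v s x ≤ B) : ∀ (m : ℕ) (u : V), surv P v (m * s) u ≤ B ^ m := by
  intro m
  induction m with
  | zero =>
    intro u
    rw [Nat.zero_mul, pow_zero, surv_zero]
    split_ifs <;> norm_num
  | succ m ih =>
    intro u
    rw [show (m + 1) * s = s + m * s by ring]
    calc surv P v (s + m * s) u ≤ surv P v s u * B ^ m :=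
          surv_add_le hP0 (pow_nonneg hB m) ih s u
      _ ≤ B * B ^ m := mul_le_mul_of_nonneg_right (hs u) (pow_nonneg hB m)
      _ = B ^ (m + 1) := (pow_succ' B m).symm

lemma matpow_nonneg (hP0 : ∀ u x, 0 ≤ P u x) :
    ∀ (s : ℕ) (u x : V), 0 ≤ ((Matrix.of P) ^ s) u x := by
  intro s
  induction s with
  | zero => intro u x; rw [pow_zero, Matrix.one_apply]; split_ifs <;> norm_num
  | succ s ih =>
    intro u x
    rw [pow_succ', Matrix.mul_apply]
    exact Finset.sum_nonneg fun y _ => mul_nonneg (hP0 u y) (ih y x)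

lemma surv_le_matpow (hP0 : ∀ u x, 0 ≤ P u x) {k : ℕ} :
    ∀ (s : ℕ) (u : V), surv P v (s + k) u ≤ ∑ x, ((Matrix.of P) ^ s) u x * surv P v k x := by
  intro s
  induction s with
  | zero =>
    intro u
    rw [Nat.zero_add, pow_zero]
    simp only [Matrix.one_apply, ite_mul, one_mul, zero_mul]
    rw [Finset.sum_ite_eq univ u (fun x => surv P v k x)]
    simp
  | succ s ih =>
    intro u
    rw [show (s + 1) + k = (s + k) + 1 by omega, surv_succ]
    split_ifs
    · exact Finset.sum_nonneg fun x _ =>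
        mul_nonneg (matpow_nonneg hP0 _ u x) (surv_nonneg hP0 k x)
    · calc ∑ x, P u x * surv P v (s + k) x
          ≤ ∑ x, P u x * (∑ y, ((Matrix.of P) ^ s) x y * surv P v k y) :=
            Finset.sum_le_sum fun x _ => mul_le_mul_of_nonneg_left (ih x) (hP0 u x)
        _ = ∑ y, (∑ x, P u x * ((Matrix.of P) ^ s) x y) * surv P v k y := by
            simp only [Finset.mul_sum]
            rw [Finset.sum_comm]
            refine Finset.sum_congr rfl fun y _ => ?_
            rw [Finset.sum_mul]
            exact Finset.sum_congr rfl fun x _ => by ring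
        _ = ∑ y, ((Matrix.of P) ^ (s+1)) u y * surv P v k y := by
            refine Finset.sum_congr rfl fun y _ => ?_
            rw [pow_succ', Matrix.mul_apply]
            rfl

end Chain

section Walk

variable {P : V → V → ℝ} {v : V} {G : SimpleGraph V}

def wkProb (P : V → V → ℝ) {G : SimpleGraph V} {x y : V} (p : G.Walk x y) : ℝ :=
  (p.darts.map fun d => P d.toProd.1 d.toProd.2).prod

lemma wkProb_nil {x : V} : wkProb P (SimpleGraph.Walk.nil : G.Walk x x) = 1 := by
  simp [wkProb]

lemma wkProb_cons {a b y : V} (h : G.Adj a b) (q : G.Walk b y) :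
    wkProb P (SimpleGraph.Walk.cons h q) = P a b * wkProb P q := by
  simp [wkProb]

lemma Pentry_le_one (hP0 : ∀ u x, 0 ≤ P u x) (hP1 : ∀ u, ∑ x, P u x = 1) (a b : V) :
    P a b ≤ 1 := by
  calc P a b ≤ ∑ x, P a x := Finset.single_le_sum (fun x _ => hP0 a x) (Finset.mem_univ b)
    _ = 1 := hP1 a

lemma wkProb_pos (hPedge : ∀ a b, G.Adj a b → 0 < P a b) {x y : V} (p : G.Walk x y) :
    0 < wkProb P p := by
  induction p with
  | nil => rw [wkProb_nil]; norm_num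
  | cons h q ih => rw [wkProb_cons]; exact mul_pos (hPedge _ _ h) ih

lemma wkProb_le_one (hP0 : ∀ u x, 0 ≤ P u x) (hP1 : ∀ u, ∑ x, P u x = 1)
    (hPedge : ∀ a b, G.Adj a b → 0 < P a b) {x y : V} (p : G.Walk x y) :
    wkProb P p ≤ 1 := by
  induction p with
  | nil => rw [wkProb_nil]
  | cons h q ih =>
    rw [wkProb_cons]
    calc P _ _ * wkProb P q ≤ 1 * 1 := by
          apply mul_le_mul (Pentry_le_one hP0 hP1 _ _) ih (le_of_lt (wkProb_pos hPedge q)) zero_le_one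
      _ = 1 := by norm_num

lemma surv_walk_le (hP0 : ∀ u x, 0 ≤ P u x) (hP1 : ∀ u, ∑ x, P u x = 1)
    (hPedge : ∀ a b, G.Adj a b → 0 < P a b) {x : V} (p : G.Walk x v) :
    surv P v p.length x ≤ 1 - wkProb P p := by
  induction p with
  | nil =>
    rw [SimpleGraph.Walk.length_nil, wkProb_nil, surv_zero, if_pos rfl]
    norm_num
  | @cons a b c h q ih =>
    rw [SimpleGraph.Walk.length_cons, wkProb_cons, surv_succ]
    have hq1 : wkProb P q ≤ 1 := wkProb_le_one hP0 hP1 hPedge q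
    have hq0 : 0 < wkProb P q := wkProb_pos hPedge q
    have hab1 : P a b ≤ 1 := Pentry_le_one hP0 hP1 a b
    have hab0 : 0 ≤ P a b := hP0 a b
    split_ifs
    · nlinarith
    · have hsplit : P a b * surv P c q.length b + ∑ x ∈ Finset.univ.erase b, P a x * surv P c q.length x
          = ∑ x, P a x * surv P c q.length x :=
        Finset.add_sum_erase Finset.univ (fun x => P a x * surv P c q.length x) (Finset.mem_univ b)
      rw [← hsplit]
      have h1 : P a b * surv P c q.length b ≤ P a b * (1 - wkProb P q) :=
        mul_le_mul_of_nonneg_left ih hab0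
      have h2 : ∑ x ∈ Finset.univ.erase b, P a x * surv P c q.length x
          ≤ ∑ x ∈ Finset.univ.erase b, P a x :=
        Finset.sum_le_sum fun x _ => by
          calc P a x * surv P c q.length x ≤ P a x * 1 :=
                mul_le_mul_of_nonneg_left (surv_le_one hP0 hP1 q.length x) (hP0 a x)
            _ = P a x := mul_one _
      have h3 : P a b + ∑ x ∈ Finset.univ.erase b, P a x = 1 := by
        rw [Finset.add_sum_erase Finset.univ (fun x => P a x) (Finset.mem_univ b)]
        exact hP1 a
      nlinarith

end Walk

section Sum

variable {P : V → V → ℝ} {v : V}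

lemma sum_surv_block_le (hP0 : ∀ u x, 0 ≤ P u x) (hP1 : ∀ u, ∑ x, P u x = 1)
    {L : ℕ} {δ : ℝ} (hδ0 : 0 < δ) (hδ1 : δ ≤ 1)
    (hLx : ∀ x, surv P v L x ≤ 1 - δ) (x : V) :
    ∀ N : ℕ, ∑ t ∈ Finset.range (N * L), surv P v t x ≤ (L : ℝ)/δ * (1 - (1-δ)^N) := by
  intro N
  induction N with
  | zero => simp
  | succ N ih =>
    have hB0 : (0:ℝ) ≤ 1 - δ := by linarith
    have hBN : (0:ℝ) ≤ (1-δ)^N := pow_nonneg hB0 N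
    rw [show (N + 1) * L = N * L + L by ring, Finset.sum_range_add]
    have h2 : ∑ j ∈ Finset.range L, surv P v (N * L + j) x ≤ (L:ℝ) * (1-δ)^N := by
      calc ∑ j ∈ Finset.range L, surv P v (N * L + j) x
          ≤ ∑ _j ∈ Finset.range L, (1-δ)^N := by
            refine Finset.sum_le_sum fun j _ => ?_
            calc surv P v (N * L + j) x ≤ surv P v (N * L) x :=
                  surv_anti hP0 hP1 (Nat.le_add_right _ _) x
              _ ≤ (1-δ)^N := surv_mul_le hP0 hB0 hLx N x
        _ = (L:ℝ) * (1-δ)^N := by rw [Finset.sum_const, Finset.card_range]; ring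
    have key2 : (L:ℝ)/δ * (1 - (1-δ)^(N+1)) = (L:ℝ)/δ * (1 - (1-δ)^N) + (L:ℝ) * (1-δ)^N := by
      rw [pow_succ']
      field_simp
      ring
    linarith

lemma summable_surv (hP0 : ∀ u x, 0 ≤ P u x) (hP1 : ∀ u, ∑ x, P u x = 1)
    {L : ℕ} (hL : 1 ≤ L) {δ : ℝ} (hδ0 : 0 < δ) (hδ1 : δ ≤ 1)
    (hLx : ∀ x, surv P v L x ≤ 1 - δ) (x : V) :
    Summable (fun t => surv P v t x) := by
  apply summable_of_sum_range_le (c := (L:ℝ)/δ) (fun t => surv_nonneg hP0 t x)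
  intro N
  have h1 : Finset.range N ⊆ Finset.range (N * L) :=
    Finset.range_subset_range.mpr (by nlinarith)
  calc ∑ t ∈ Finset.range N, surv P v t x ≤ ∑ t ∈ Finset.range (N * L), surv P v t x :=
        Finset.sum_le_sum_of_subset_of_nonneg h1 (fun t _ _ => surv_nonneg hP0 t x)
    _ ≤ (L:ℝ)/δ * (1 - (1-δ)^N) := sum_surv_block_le hP0 hP1 hδ0 hδ1 hLx x N
    _ ≤ (L:ℝ)/δ * 1 := by
        refine mul_le_mul_of_nonneg_left ?_ (by positivity)
        have : (0:ℝ) ≤ (1-δ)^N := pow_nonneg (by linarith) N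
        linarith
    _ = (L:ℝ)/δ := mul_one _

lemma markov_surv (hP0 : ∀ u x, 0 ≤ P u x) (hP1 : ∀ u, ∑ x, P u x = 1)
    (π : V → ℝ) (hπ0 : ∀ x, 0 ≤ π x)
    (hsum : ∀ x, Summable (fun t => surv P v t x)) (k : ℕ) :
    ((k:ℝ) + 1) * ∑ x, π x * surv P v k x ≤ ∑ x, π x * ∑' t, surv P v t x := by
  calc ((k:ℝ) + 1) * ∑ x, π x * surv P v k x
      = ∑ _j ∈ Finset.range (k+1), ∑ x, π x * surv P v k x := by
        rw [Finset.sum_const, Finset.card_range]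
        push_cast
        ring
    _ ≤ ∑ j ∈ Finset.range (k+1), ∑ x, π x * surv P v j x := by
        refine Finset.sum_le_sum fun j hj => Finset.sum_le_sum fun x _ => ?_
        exact mul_le_mul_of_nonneg_left
          (surv_anti hP0 hP1 (Nat.le_of_lt_succ (Finset.mem_range.mp hj)) x) (hπ0 x)
    _ = ∑ x, π x * ∑ j ∈ Finset.range (k+1), surv P v j x := by
        rw [Finset.sum_comm]
        exact Finset.sum_congr rfl fun x _ => (Finset.mul_sum _ _ _).symm
    _ ≤ ∑ x, π x * ∑' t, surv P v t x := by
        refine Finset.sum_le_sum fun x _ => mul_le_mul_of_nonneg_left ?_ (hπ0 x)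
        exact Summable.sum_le_tsum (Finset.range (k+1)) (fun i _ => surv_nonneg hP0 i x) (hsum x)

lemma hitReal_eq_tsum_surv (P : V → V → ℝ) (u v : V) :
    hitReal P u v = ∑' t, surv P v t u :=
  tsum_congr fun t => eventProb_eq_surv P v t u

lemma exists_adj_of_reachable {G : SimpleGraph V} {a b : V} (hab : a ≠ b)
    (h : G.Reachable a b) : ∃ c, G.Adj a c := by
  obtain ⟨p⟩ := h
  cases p with
  | nil => exact absurd rfl hab
  | cons hadj q => exact ⟨_, hadj⟩

end Sum

section Main

variable {P : V → V → ℝ} {v : V}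

lemma exp_neg_half_ge : (3/5:ℝ) ≤ Real.exp (-(1/2)) := by
  have hmul : Real.exp (1/2) * Real.exp (1/2) = Real.exp 1 := by
    rw [← Real.exp_add]; norm_num
  have he' : Real.exp 1 < 25/9 := lt_trans Real.exp_one_lt_d9 (by norm_num)
  have h52 : Real.exp (1/2) ≤ 5/3 := by
    by_contra hcon
    push_neg at hcon
    have hsq : (25/9:ℝ) < Real.exp (1/2) * Real.exp (1/2) := by
      nlinarith [Real.exp_pos (1/2)]
    rw [hmul] at hsq
    linarith
  rw [Real.exp_neg, show (3/5:ℝ) = (5/3:ℝ)⁻¹ by norm_num]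
  exact inv_anti₀ (Real.exp_pos _) h52

lemma survBound {π : V → ℝ} {H : ℝ} {Tn : ℕ} {nR : ℝ}
    (hP0 : ∀ u x, 0 ≤ P u x) (hP1 : ∀ u, ∑ x, P u x = 1)
    (hπ0 : ∀ x, 0 ≤ π x)
    (hn4 : 4 ≤ nR) (hcard : (Fintype.card V : ℝ) ≤ nR)
    (hmix : ∀ u x, |((Matrix.of P) ^ Tn) u x - π x| ≤ 1 / nR ^ 3)
    (hsum : ∀ x, Summable fun t => surv P v t x)
    (hH : H = ∑ x, π x * ∑' t, surv P v t x)
    (hHpos : 0 < H) (u : V) (t : ℕ) :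
    surv P v t u ≤ Real.exp (-((⌊(t:ℝ) / ((Tn:ℝ) + 2 * H)⌋₊ : ℕ) : ℝ) / 2) := by
  have hnR0 : (0:ℝ) < nR := by linarith
  obtain ⟨τ, hτdef⟩ : ∃ τ : ℝ, τ = (Tn:ℝ) + 2 * H := ⟨_, rfl⟩
  rw [← hτdef]
  have hτ0 : 0 < τ := by
    have : (0:ℝ) ≤ (Tn:ℝ) := Nat.cast_nonneg _
    rw [hτdef]; linarith
  obtain ⟨m, hmdef⟩ : ∃ m : ℕ, m = ⌊(t:ℝ)/τ⌋₊ := ⟨_, rfl⟩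
  rw [← hmdef]
  rcases Nat.eq_zero_or_pos m with hm | hm
  · rw [hm]
    simp only [Nat.cast_zero, neg_zero, zero_div, Real.exp_zero]
    exact surv_le_one hP0 hP1 t u
  · obtain ⟨s, hsdef⟩ : ∃ s : ℕ, s = t / m := ⟨_, rfl⟩
    have hm0R : (0:ℝ) < m := by exact_mod_cast hm
    have hms : m * s ≤ t := by rw [hsdef, Nat.mul_comm]; exact Nat.div_mul_le_self t m
    have hfl : (m:ℝ) ≤ (t:ℝ)/τ := by
      rw [hmdef]; exact Nat.floor_le (div_nonneg (Nat.cast_nonneg t) (le_of_lt hτ0))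
    have hmt : (m:ℝ) * τ ≤ t := (le_div_iff₀ hτ0).mp hfl
    have h2 : m * s + t % m = t := by rw [hsdef]; exact Nat.div_add_mod t m
    have h1 : t % m < m := Nat.mod_lt t hm
    have htm : (t:ℝ) < m * ((s:ℝ) + 1) := by
      have h4 : t < m * s + m := by
        calc t = m * s + t % m := h2.symm
          _ < m * s + m := Nat.add_lt_add_left h1 _
      have h5 : (t:ℝ) < (m:ℝ) * s + m := by exact_mod_cast h4
      linarith [h5, mul_add (m:ℝ) (s:ℝ) 1, mul_one (m:ℝ)]
    have hsτ : τ - 1 < (s:ℝ) := by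
      have h5 : (m:ℝ) * τ < (m:ℝ) * ((s:ℝ)+1) := lt_of_le_of_lt hmt htm
      have := (mul_lt_mul_iff_right₀ hm0R).mp h5
      linarith
    have hsT : Tn ≤ s := by
      have hx1 : (Tn : ℝ) < (s:ℝ) + 1 := by rw [hτdef] at hsτ; linarith
      have hx2 : Tn < s + 1 := by exact_mod_cast hx1
      omega
    obtain ⟨k, hkdef⟩ : ∃ k : ℕ, k = s - Tn := ⟨_, rfl⟩
    have hks : s = Tn + k := by omega
    have hkR : 2 * H ≤ (k:ℝ) + 1 := by
      have hsk : (s:ℝ) = (Tn : ℝ) + k := by exact_mod_cast hks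
      rw [hτdef] at hsτ; linarith
    have hk1 : (0:ℝ) < (k:ℝ) + 1 := by positivity
    have hGπ : ∑ x, π x * surv P v k x ≤ H / ((k:ℝ)+1) := by
      rw [le_div_iff₀ hk1]
      have := markov_surv hP0 hP1 π hπ0 hsum k
      rw [← hH] at this
      linarith
    have hhalf : H / ((k:ℝ)+1) ≤ 1/2 := by
      rw [div_le_iff₀ hk1]; linarith
    have hn2 : 1/nR^2 ≤ 1/16 := by
      have h16 : (16:ℝ) ≤ nR^2 := by nlinarith
      exact one_div_le_one_div_of_le (by norm_num) h16
    have hmixb : ∀ x, surv P v (Tn + k) x ≤ (∑ y, π y * surv P v k y) + 1/nR^2 := by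
      intro x
      calc surv P v (Tn + k) x ≤ ∑ y, ((Matrix.of P) ^ Tn) x y * surv P v k y :=
            surv_le_matpow hP0 Tn x
        _ ≤ ∑ y, (π y * surv P v k y + 1/nR^3) := by
            refine Finset.sum_le_sum fun y _ => ?_
            have habs := abs_le.mp (hmix x y)
            have hs0 := surv_nonneg (v := v) hP0 k y
            have hs1 := surv_le_one (v := v) hP0 hP1 k y
            have hM0 := matpow_nonneg (P := P) hP0 Tn x y
            have hε : (0:ℝ) ≤ 1/nR^3 := by positivity
            have hπy := hπ0 y
            nlinarith [habs.2, hs0, hs1, hε, hπy, hM0]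
        _ = (∑ y, π y * surv P v k y) + (Fintype.card V : ℝ) * (1/nR^3) := by
            rw [Finset.sum_add_distrib, Finset.sum_const, Finset.card_univ, nsmul_eq_mul]
        _ ≤ (∑ y, π y * surv P v k y) + 1/nR^2 := by
            have hstep : (Fintype.card V : ℝ) * (1/nR^3) ≤ nR * (1/nR^3) := by
              refine mul_le_mul_of_nonneg_right hcard (by positivity)
            have heq : nR * (1/nR^3) = 1/nR^2 := by field_simp
            linarith
    have hexp : (3/5:ℝ) ≤ Real.exp (-(1/2)) := exp_neg_half_ge
    have hblock : ∀ x, surv P v s x ≤ Real.exp (-(1/2)) := by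
      intro x
      have h6 : surv P v s x ≤ (∑ y, π y * surv P v k y) + 1/nR^2 := by
        rw [hks]; exact hmixb x
      calc surv P v s x ≤ 1/2 + 1/16 := by linarith
        _ ≤ 3/5 := by norm_num
        _ ≤ _ := hexp
    calc surv P v t u ≤ surv P v (m * s) u := surv_anti hP0 hP1 hms u
      _ ≤ (Real.exp (-(1/2)))^m := surv_mul_le hP0 (le_of_lt (Real.exp_pos _)) hblock m u
      _ = Real.exp (-((m:ℕ):ℝ)/2) := by rw [← Real.exp_nat_mul]; congr 1; ring

end Main

end AuxProof

/-- Along a sequence of finite connected graphs on `n` vertices carrying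
an ergodic random walk with stationary distribution `π` and mixing time `T` with
`max_{u,x} |P_u^{(T)}(x) − π_x| ≤ 1/n³`: for any vertices `u, v` and any `t ≥ 0`, the
probability that the walk started at `u` does not visit `v` during steps `0,…,t` is at most
`exp(−(1−o(1))·⌊t/τ_v⌋/2)`, where `τ_v = T + 2·H[π,v]`. -/
theorem prob_no_visit_le_exp
    (G : ∀ n : ℕ, SimpleGraph (Fin n)) (w : ∀ n : ℕ, Fin n → Fin n → ℝ)
    (hsymm : ∀ n u v, w n u v = w n v u)
    (hpos : ∀ n u v, (G n).Adj u v → 0 < w n u v)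
    (T : ℕ → ℕ)
    (hvalid : ∀ᶠ n : ℕ in atTop,
      (G n).Connected ∧ ¬ (G n).Colorable 2 ∧
      (∀ u x : Fin n,
        |((Matrix.of (wP (G n) (w n))) ^ T n) u x - statW (G n) (w n) x| ≤ 1 / (n : ℝ) ^ 3)) :
    ∃ c : ℕ → ℝ, Tendsto c atTop (𝓝 0) ∧
      ∀ᶠ n : ℕ in atTop, ∀ (u v : Fin n) (t : ℕ),
        eventProb (wP (G n) (w n)) u t (fun f => ∀ i, f i ≠ v) ≤
          Real.exp (-((1 - c n) *
            (⌊(t : ℝ) / ((T n : ℝ) + 2 * hitFromStat (G n) (w n) v)⌋₊ : ℕ)) / 2) := by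
  refine ⟨fun _ => 0, tendsto_const_nhds, ?_⟩
  filter_upwards [hvalid, eventually_ge_atTop 4] with n hn hn4
  obtain ⟨hconn, _hbip, hmix⟩ := hn
  intro u v t
  have hcard1 : 1 < Fintype.card (Fin n) := by rw [Fintype.card_fin]; omega
  have hadj : ∀ a : Fin n, ∃ c, (G n).Adj a c := by
    intro a
    obtain ⟨b, hb⟩ := Fintype.exists_ne_of_one_lt_card hcard1 a
    exact exists_adj_of_reachable (Ne.symm hb) (hconn.preconnected a b)
  have hw0 : ∀ a c : Fin n, 0 ≤ (if (G n).Adj a c then w n a c else 0) := by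
    intro a c; split_ifs with h
    · exact le_of_lt (hpos n a c h)
    · exact le_refl 0
  have hdeg : ∀ a : Fin n, 0 < ∑ x, if (G n).Adj a x then w n a x else 0 := by
    intro a
    obtain ⟨c, hc⟩ := hadj a
    refine Finset.sum_pos' (fun x _ => hw0 a x) ⟨c, Finset.mem_univ c, ?_⟩
    rw [if_pos hc]; exact hpos n a c hc
  have hP0 : ∀ a b, 0 ≤ wP (G n) (w n) a b :=
    fun a b => div_nonneg (hw0 a b) (le_of_lt (hdeg a))
  have hP1 : ∀ a, ∑ x, wP (G n) (w n) a x = 1 := by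
    intro a
    unfold wP
    rw [← Finset.sum_div, div_self (ne_of_gt (hdeg a))]
  have hPedge : ∀ a b, (G n).Adj a b → 0 < wP (G n) (w n) a b := by
    intro a b h
    unfold wP
    rw [if_pos h]
    exact div_pos (hpos n a b h) (hdeg a)
  have hWpos : 0 < ∑ a : Fin n, ∑ x, if (G n).Adj a x then w n a x else 0 :=
    Finset.sum_pos (fun a _ => hdeg a) ⟨v, Finset.mem_univ v⟩
  have hπ0 : ∀ x, 0 ≤ statW (G n) (w n) x := by
    intro x
    unfold statW
    exact div_nonneg (le_of_lt (hdeg x)) (le_of_lt hWpos)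
  have hwalk : ∀ x : Fin n, ∃ (l : ℕ) (b : ℝ),
      0 < b ∧ b ≤ 1 ∧ surv (wP (G n) (w n)) v l x ≤ 1 - b := by
    intro x
    obtain ⟨p⟩ := hconn.preconnected x v
    exact ⟨p.length, wkProb (wP (G n) (w n)) p, wkProb_pos hPedge p,
      wkProb_le_one hP0 hP1 hPedge p, surv_walk_le hP0 hP1 hPedge p⟩
  choose l δf hδf0 hδf1 hδfs using hwalk
  have hne : (Finset.univ : Finset (Fin n)).Nonempty := ⟨v, Finset.mem_univ v⟩
  have hδ0 : 0 < Finset.univ.inf' hne δf := by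
    rw [Finset.lt_inf'_iff]; exact fun i _ => hδf0 i
  have hδ1 : Finset.univ.inf' hne δf ≤ 1 :=
    le_trans (Finset.inf'_le δf (Finset.mem_univ v)) (hδf1 v)
  have hLx : ∀ x, surv (wP (G n) (w n)) v (Finset.univ.sup l + 1) x
      ≤ 1 - Finset.univ.inf' hne δf := by
    intro x
    have h1 : l x ≤ Finset.univ.sup l + 1 :=
      le_trans (Finset.le_sup (Finset.mem_univ x)) (Nat.le_succ _)
    have h2 := Finset.inf'_le δf (Finset.mem_univ x)
    calc surv (wP (G n) (w n)) v (Finset.univ.sup l + 1) x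
        ≤ surv (wP (G n) (w n)) v (l x) x := surv_anti hP0 hP1 h1 x
      _ ≤ 1 - δf x := hδfs x
      _ ≤ 1 - Finset.univ.inf' hne δf := by linarith
  have hsum : ∀ x, Summable fun tt => surv (wP (G n) (w n)) v tt x :=
    fun x => summable_surv hP0 hP1 (Nat.le_add_left 1 _) hδ0 hδ1 hLx x
  have hHsum : hitFromStat (G n) (w n) v
      = ∑ x, statW (G n) (w n) x * ∑' tt, surv (wP (G n) (w n)) v tt x := by
    unfold hitFromStat
    exact Finset.sum_congr rfl fun x _ => by rw [hitReal_eq_tsum_surv]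
  have htsum0 : ∀ x, 0 ≤ ∑' tt, surv (wP (G n) (w n)) v tt x :=
    fun x => tsum_nonneg fun tt => surv_nonneg hP0 tt x
  have hHpos : 0 < hitFromStat (G n) (w n) v := by
    obtain ⟨u0, hu0⟩ := Fintype.exists_ne_of_one_lt_card hcard1 v
    rw [hHsum]
    refine Finset.sum_pos' (fun x _ => mul_nonneg (hπ0 x) (htsum0 x))
      ⟨u0, Finset.mem_univ u0, ?_⟩
    have hπu0 : 0 < statW (G n) (w n) u0 := by
      unfold statW; exact div_pos (hdeg u0) hWpos
    have h1 : (1:ℝ) ≤ ∑' tt, surv (wP (G n) (w n)) v tt u0 := by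
      have h2 := Summable.le_tsum (hsum u0) 0 (fun j _ => surv_nonneg hP0 j u0)
      rwa [surv_zero, if_neg hu0] at h2
    nlinarith
  have hn4R : (4:ℝ) ≤ (n:ℝ) := by exact_mod_cast hn4
  have hcardle : ((Fintype.card (Fin n)):ℝ) ≤ (n:ℝ) := by rw [Fintype.card_fin]
  have hb := survBound (v := v) hP0 hP1 hπ0 hn4R hcardle hmix hsum hHsum hHpos u t
  rw [eventProb_eq_surv]
  calc surv (wP (G n) (w n)) v t u
      ≤ Real.exp (-((⌊(t:ℝ) / ((T n:ℝ) + 2 * hitFromStat (G n) (w n) v)⌋₊ : ℕ) : ℝ) / 2) := hb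
    _ ≤ _ := by norm_num
end

section
/- For any finite connected graph G on n vertices and any two vertices u, v of G, if ρ = (x_0, x_1, …, x_ℓ) is a shortest path between u = x_0 and v = x_ℓ, then the sum of the degrees of the vertices along the path satisfies Σ_{i=0}^{ℓ} d(x_i) ≤ 3n. -/
/-!
Along a shortest walk `x₀, …, x_ℓ`, every subwalk is again shortest, so `dist xᵢ xⱼ = j - i`.
A vertex `y` adjacent to both `xᵢ` and `xⱼ` gives `dist xᵢ xⱼ ≤ 2`, so the neighbours of `y`
on the walk have indices in a window of length `2`: at most three of them. Counting the pairs
`(i, y)` with `xᵢ ~ y` once by `i` and once by `y` bounds the degree sum by `3n`.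
-/

open Finset Filter Classical
open scoped ENNReal

noncomputable section

variable {V : Type*} [Fintype V] [DecidableEq V]

/-- Degree of a vertex in a simple graph. -/
def gdeg (G : SimpleGraph V) (u : V) : ℕ :=
  (Finset.univ.filter (fun v => G.Adj u v)).card

/-- Transition probabilities of the simple random walk on `G`. -/
def srw (G : SimpleGraph V) (u v : V) : ℝ :=
  if G.Adj u v then ((gdeg G u : ℝ))⁻¹ else 0

/-- Expected hitting time `H[u,v]`, via `E[T] = ∑_t Pr(T > t)`. -/
def hitTime (P : V → V → ℝ) (u v : V) : ℝ≥0∞ :=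
  ∑' t : ℕ, ENNReal.ofReal (eventProb P u t (fun f => ∀ i, f i ≠ v))

/-- Expected cover time starting from `u`. -/
def coverTimeFrom (P : V → V → ℝ) (u : V) : ℝ≥0∞ :=
  ∑' t : ℕ, ENNReal.ofReal (eventProb P u t (fun f => ∃ v, ∀ i, f i ≠ v))

/-- The cover time `COV`: maximum over starting vertices of the expected cover time. -/
def coverTime (P : V → V → ℝ) : ℝ≥0∞ := ⨆ u, coverTimeFrom P u

/-- Stationary probability of `v` for the simple random walk: `d(v)/(2|E|)`. -/
def statPi (G : SimpleGraph V) (v : V) : ℝ := (gdeg G v : ℝ) / (∑ u, (gdeg G u : ℝ))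

/-- Number of visits to `w` in a trajectory. -/
def visits {t : ℕ} (f : Fin (t + 1) → V) (w : V) : ℕ :=
  (Finset.univ.filter (fun i => f i = w)).card

/-- The blanket-cover time `BCOV[G]`. -/
def blanketCoverTime (G : SimpleGraph V) : ℝ≥0∞ :=
  ⨆ u, ∑' t : ℕ, ENNReal.ofReal (eventProb (srw G) u t
    (fun f => ∃ w, (visits f w : ℝ≥0∞) < ENNReal.ofReal (statPi G w) * coverTime (srw G)))

/-- Minimum degree. -/
def minDeg (G : SimpleGraph V) : ℕ := sInf (Set.range (gdeg G))

/-- Maximum degree. -/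
def maxDeg (G : SimpleGraph V) : ℕ := Finset.univ.sup (gdeg G)

/-- Number of edges (by the handshaking lemma). -/
def edgeCount (G : SimpleGraph V) : ℕ := (∑ v, gdeg G v) / 2

/-- Diameter. -/
def gdiam (G : SimpleGraph V) : ℕ := Finset.univ.sup (fun p : V × V => G.dist p.1 p.2)

/-- Effective resistance between `u` and `v`, all edges having unit resistance:
the reciprocal of the effective conductance, the latter given by the Dirichlet
variational principle. -/
def effRes (G : SimpleGraph V) (u v : V) : ℝ :=
  (sInf {e : ℝ | ∃ f : V → ℝ, f u = 1 ∧ f v = 0 ∧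
      e = (∑ x, ∑ y, if G.Adj x y then (f x - f y) ^ 2 else 0) / 2})⁻¹

/-- Maximum effective resistance over pairs of vertices. -/
def Rmax (G : SimpleGraph V) : ℝ := sSup {r : ℝ | ∃ u v, r = effRes G u v}

/-- The minimum-degree weighting scheme: each edge `(u,v)` gets weight
`1/min{d(u),d(v)}`. -/
def mindegWeight (G : SimpleGraph V) (u v : V) : ℝ :=
  ((min (gdeg G u) (gdeg G v) : ℕ) : ℝ)⁻¹

/-- Transition probabilities of the minimum-degree weighted random walk. -/
def mindegP (G : SimpleGraph V) : V → V → ℝ := wP G (mindegWeight G)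

end

lemma Finset.card_le_add_one_of_forall_le_add {s : Finset ℕ} {k : ℕ}
    (h : ∀ i ∈ s, ∀ j ∈ s, j ≤ i + k) : #s ≤ k + 1 := by
  rcases s.eq_empty_or_nonempty with rfl | hs
  · simp
  calc #s ≤ #(Icc (s.min' hs) (s.min' hs + k)) :=
        card_le_card fun j hj => mem_Icc.2 ⟨s.min'_le j hj, h _ (s.min'_mem hs) j hj⟩
    _ = k + 1 := by rw [Nat.card_Icc]; omega

namespace SimpleGraph.Walk

variable {V : Type*} {G : SimpleGraph V} {u v : V}

lemma sum_map_support_eq_sum_range_getVert {M : Type*} [AddCommMonoid M]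
    (p : G.Walk u v) (f : V → M) :
    (p.support.map f).sum = ∑ i ∈ range (p.length + 1), f (p.getVert i) := by
  have hsupport : p.support = (List.range (p.length + 1)).map p.getVert :=
    List.ext_getElem (by simp) fun i h _ => by
      rw [List.getElem_map, List.getElem_range]
      exact (p.getVert_eq_support_getElem (by simp at h; omega)).symm
  rw [hsupport, List.map_map, Finset.sum_eq_multiset_sum]
  rfl

section Shortest

variable {p : G.Walk u v} (hp : p.length = G.dist u v)
include hp

lemma dist_getVert_getVert_of_length_eq_dist {i j : ℕ} (hij : i ≤ j) (hj : j ≤ p.length) :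
    G.dist (p.getVert i) (p.getVert j) = j - i := by
  have hsub : ((p.drop i).take (j - i)).IsSubwalk p :=
    (isSubwalk_take _ _).trans (isSubwalk_drop _ _)
  have := length_eq_dist_of_subwalk hp hsub
  rw [take_length, drop_length, drop_getVert, Nat.add_sub_cancel' hij] at this
  omega

lemma le_add_two_of_adj_getVert_of_length_eq_dist {i j : ℕ} (hj : j ≤ p.length) {y : V}
    (hiy : G.Adj (p.getVert i) y) (hjy : G.Adj (p.getVert j) y) : j ≤ i + 2 := by
  rcases le_or_gt j i with hji | hij
  · omega
  have h2 : G.dist (p.getVert i) (p.getVert j) ≤ 2 := dist_le (cons hiy (cons hjy.symm nil))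
  rw [dist_getVert_getVert_of_length_eq_dist hp hij.le hj] at h2
  omega

lemma card_adj_getVert_le_three_of_length_eq_dist (y : V) :
    #{i ∈ range (p.length + 1) | G.Adj (p.getVert i) y} ≤ 3 :=
  card_le_add_one_of_forall_le_add fun i hi j hj => by
    simp only [mem_filter, mem_range] at hi hj
    exact le_add_two_of_adj_getVert_of_length_eq_dist hp (by omega) hi.2 hj.2

end Shortest

end SimpleGraph.Walk

theorem shortest_path_degree_sum_le_general
    {V : Type*} [Fintype V] (G : SimpleGraph V)
    (u v : V) (p : G.Walk u v) (hshort : p.length = G.dist u v) :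
    (p.support.map (gdeg G)).sum ≤ 3 * Fintype.card V := by
  let onWalkAdj (i : ℕ) (y : V) : Prop := G.Adj (p.getVert i) y
  calc (p.support.map (gdeg G)).sum
      = ∑ i ∈ range (p.length + 1), #(univ.bipartiteAbove onWalkAdj i) :=
        p.sum_map_support_eq_sum_range_getVert (gdeg G)
    _ = ∑ y, #((range (p.length + 1)).bipartiteBelow onWalkAdj y) :=
        sum_card_bipartiteAbove_eq_sum_card_bipartiteBelow _
    _ ≤ ∑ _y : V, 3 :=
        sum_le_sum fun y _ => p.card_adj_getVert_le_three_of_length_eq_dist hshort y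
    _ = 3 * Fintype.card V := by simp [mul_comm]

/-- For any finite connected graph `G` on `n` vertices and any shortest
path `ρ = (x_0,…,x_ℓ)` between two vertices `u` and `v`, the sum of the degrees of the
vertices along the path is at most `3n`. -/
theorem shortest_path_degree_sum_le
    {V : Type*} [Fintype V] [DecidableEq V] (G : SimpleGraph V) (hG : G.Connected)
    (u v : V) (p : G.Walk u v) (hp : p.IsPath) (hshort : p.length = G.dist u v) :
    (p.support.map (gdeg G)).sum ≤ 3 * Fintype.card V :=
  shortest_path_degree_sum_le_general G u v p hshort
end
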